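/- arXiv:2510.27142 — 2 statements merged into one kernel-verified Lean document; each statement's English description precedes it below -/
import Mathlib

section
/- (Closed form of the twisted factor, §2.3.) With the notation of the context, g · J_0(x_0) · d_n(vz) · g^{−1} = ∏_{j=0}^{n−1} (1 + (−1)^j·x_0·x_1⋯x_j·z·E_{n,j+1}), the product taken left-to-right in increasing j, and this matrix also equals 1 + ∑_{j=0}^{n−1} (−1)^j·x_0·x_1⋯x_j·z·E_{n,j+1}. -/
/-!
Closed form of the twisted factor (§2.3):
`g · J_0(x_0) · d_n(vz) · g⁻¹ = ∏_{j=0}^{n−1} (1 + (−1)^j x_0⋯x_j z E_{n,j+1})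
  = 1 + ∑_{j=0}^{n−1} (−1)^j x_0⋯x_j z E_{n,j+1}`.
Matrices are indexed by `Fin n` (0-based), so the paper's `E_{i,j}`
(rows/columns 1,…,n) is `stdBasisMatrix (i−1) (j−1) 1`.
-/

noncomputable section
open Matrix
open Fin.NatCast

/-- ascending product `F 0 * F 1 * ⋯ * F (k−1)`. -/
def prodAsc {M : Type*} [Monoid M] (F : ℕ → M) : ℕ → M
  | 0 => 1
  | k + 1 => prodAsc F k * F k

/-- descending product `F (k−1) * ⋯ * F 1 * F 0`. -/
def prodDesc {M : Type*} [Monoid M] (F : ℕ → M) : ℕ → M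
  | 0 => 1
  | k + 1 => F k * prodDesc F k

variable {R : Type*} [CommRing R]

/-- `J_k(c) := 1 + c·E_{k,k+1}` for `1 ≤ k ≤ n−1`. -/
def Jmat (n : ℕ) [NeZero n] (k : ℕ) (c : R) : Matrix (Fin n) (Fin n) R :=
  1 + c • single (((k - 1 : ℕ)) : Fin n) ((k : ℕ) : Fin n) (1 : R)

/-- `J_0(c) := 1 + c·z·E_{n,1}`. -/
def J0mat (n : ℕ) [NeZero n] (z c : R) : Matrix (Fin n) (Fin n) R :=
  1 + (c * z) • single (((n - 1 : ℕ)) : Fin n) ((0 : ℕ) : Fin n) (1 : R)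

/-- `d_n(c) := 1 + c·E_{n,n}`. -/
def dnmat (n : ℕ) [NeZero n] (c : R) : Matrix (Fin n) (Fin n) R :=
  1 + c • single (((n - 1 : ℕ)) : Fin n) (((n - 1 : ℕ)) : Fin n) (1 : R)

/-!
With 0-based indices, write `ℓ` for the last index and `c_j = (−1)^j x_0⋯x_j z`. Every matrix
in sight is the identity plus a matrix `N` supported on row `ℓ`. Such an `N` is killed on the left
by `E_{k,k+1}` for `k + 1 < ℓ`, so conjugating `1 + N` by `1 + x_{k+1} E_{k,k+1}` gives
`1 + N − x_{k+1} N E_{k,k+1}`: column `k` of `N`, times `−x_{k+1}`, is added to column `k + 1`.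
Starting from `J_0(x_0) d_n(vz) = 1 + c_0 E_{ℓ,0} + c_{n−1} E_{ℓ,ℓ}`, the conjugations by
`J_1, …, J_{n−2}` fill in `c_1, …, c_{n−2}`. Finally, products of the `E_{ℓ,j}` in increasing
order of `j` vanish, so the ordered product `∏ (1 + c_j E_{ℓ,j})` is the same sum.
-/

open Finset

section Ring

variable {A : Type*}

theorem one_add_mul_one_add_of_mul_eq_zero [NonAssocSemiring A] {a b : A} (h : a * b = 0) :
    (1 + a) * (1 + b) = 1 + a + b := by
  rw [mul_add, add_mul, add_mul, h]
  simp only [mul_one, one_mul, add_zero]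

theorem one_add_mul_one_add_mul_one_sub [Ring A] {e N : A} (heN : e * N = 0) (hee : e * e = 0) :
    (1 + e) * (1 + N) * (1 - e) = 1 + N - N * e := by
  rw [one_add_mul_one_add_of_mul_eq_zero heN, mul_sub, mul_one, add_mul, add_mul, one_mul, hee]
  abel

theorem prodAsc_one_add_of_mul_eq_zero [Semiring A] (N : ℕ → A) (k : ℕ)
    (h : ∀ i j, i < j → j < k → N i * N j = 0) :
    prodAsc (fun j => 1 + N j) k = 1 + ∑ j ∈ range k, N j := by
  induction k with
  | zero => simp [prodAsc]
  | succ k ih =>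
    have hzero : (∑ j ∈ range k, N j) * N k = 0 := by
      rw [sum_mul]
      exact sum_eq_zero fun i hi => h i k (mem_range.mp hi) k.lt_succ_self
    rw [prodAsc, ih fun i j hij hj => h i j hij (hj.trans k.lt_succ_self),
      one_add_mul_one_add_of_mul_eq_zero hzero, sum_range_succ, add_assoc]

end Ring

theorem smul_single_mul_smul_single_of_ne {m α : Type*} [Fintype m] [DecidableEq m]
    [CommSemiring α] {i j k l : m} (h : j ≠ k) (a b : α) :
    (a • single i j (1 : α)) * (b • single k l 1) = 0 := by
  simp [h]

theorem smul_single_mul_smul_single_same {m α : Type*} [Fintype m] [DecidableEq m]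
    [CommSemiring α] (i j l : m) (a b : α) :
    (a • single i j (1 : α)) * (b • single j l 1) = (a * b) • single i l 1 := by
  simp

theorem natCast_fin_ne_of_lt {n a b : ℕ} [NeZero n] (ha : a < n) (hb : b < n) (h : a ≠ b) :
    (a : Fin n) ≠ b := fun hab =>
  h (by simpa [Fin.val_cast_of_lt ha, Fin.val_cast_of_lt hb] using congrArg Fin.val hab)

section

variable {n : ℕ} [NeZero n]

def twistCoeff (x : Fin n → R) (z : R) (j : ℕ) : R :=
  ((-1 : R) ^ j * ∏ m ∈ range (j + 1), x m) * z

theorem twistCoeff_zero (x : Fin n → R) (z : R) : twistCoeff x z 0 = x 0 * z := by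
  simp [twistCoeff]

theorem twistCoeff_succ (x : Fin n → R) (z : R) (j : ℕ) :
    twistCoeff x z (j + 1) = twistCoeff x z j * -x (j + 1 : ℕ) := by
  simp only [twistCoeff, pow_succ, prod_range_succ _ (j + 1)]
  ring

theorem twistCoeff_pred (x : Fin n → R) (z : R) :
    twistCoeff x z (n - 1) = (-1 : R) ^ (n - 1) * (∏ i : Fin n, x i) * z := by
  rw [twistCoeff, Nat.sub_add_cancel NeZero.one_le, ← Fin.prod_univ_eq_prod_range]
  simp [Fin.cast_val_eq_self]

theorem Jmat_succ (k : ℕ) (c : R) :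
    Jmat n (k + 1) c = 1 + c • single (k : Fin n) ((k + 1 : ℕ) : Fin n) 1 := by
  rw [Jmat, Nat.add_sub_cancel]

def partialTwist (x : Fin n → R) (z : R) (k : ℕ) : Matrix (Fin n) (Fin n) R :=
  prodDesc (fun j => Jmat n (j + 1) (x ((j + 1 : ℕ) : Fin n))) k
    * J0mat n z (x 0) * dnmat n (((-1 : R) ^ (n - 1) * ∏ i : Fin n, x i) * z)
    * prodAsc (fun j => Jmat n (j + 1) (-(x ((j + 1 : ℕ) : Fin n)))) k

theorem partialTwist_succ (x : Fin n → R) (z : R) (k : ℕ) :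
    partialTwist x z (k + 1) =
      Jmat n (k + 1) (x ((k + 1 : ℕ) : Fin n)) * partialTwist x z k
        * Jmat n (k + 1) (-(x ((k + 1 : ℕ) : Fin n))) := by
  simp only [partialTwist, prodDesc, prodAsc, mul_assoc]

theorem partialTwist_eq (hn : 2 ≤ n) (x : Fin n → R) (z : R) (k : ℕ) (hk : k ≤ n - 2) :
    partialTwist x z k =
      1 + (∑ j ∈ range (k + 1), twistCoeff x z j • single ((n - 1 : ℕ) : Fin n) (j : Fin n) 1
        + twistCoeff x z (n - 1) • single ((n - 1 : ℕ) : Fin n) ((n - 1 : ℕ) : Fin n) 1) := by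
  induction k with
  | zero =>
    have hzero : (x 0 * z) • single ((n - 1 : ℕ) : Fin n) ((0 : ℕ) : Fin n) (1 : R)
        * twistCoeff x z (n - 1) • single ((n - 1 : ℕ) : Fin n) ((n - 1 : ℕ) : Fin n) 1 = 0 :=
      smul_single_mul_smul_single_of_ne (natCast_fin_ne_of_lt (by omega) (by omega) (by omega)) _ _
    rw [partialTwist, prodDesc, prodAsc, one_mul, mul_one, ← twistCoeff_pred, J0mat, dnmat,
      one_add_mul_one_add_of_mul_eq_zero hzero, sum_range_one, twistCoeff_zero, add_assoc]
  | succ k ih =>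
    set ℓ : Fin n := ((n - 1 : ℕ) : Fin n)
    set a := x ((k + 1 : ℕ) : Fin n)
    set e : Matrix (Fin n) (Fin n) R := a • single (k : Fin n) ((k + 1 : ℕ) : Fin n) 1
    set S := ∑ j ∈ range (k + 1), twistCoeff x z j • single ℓ (j : Fin n) (1 : R)
    set D := twistCoeff x z (n - 1) • single ℓ ℓ (1 : R)
    have he_mul : e * (S + D) = 0 := by
      have hℓ : ((k + 1 : ℕ) : Fin n) ≠ ℓ := natCast_fin_ne_of_lt (by omega) (by omega) (by omega)
      rw [mul_add, mul_sum, sum_eq_zero fun j _ => smul_single_mul_smul_single_of_ne hℓ _ _,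
        smul_single_mul_smul_single_of_ne hℓ, add_zero]
    have he_sq : e * e = 0 :=
      smul_single_mul_smul_single_of_ne (natCast_fin_ne_of_lt (by omega) (by omega) (by omega)) _ _
    have hmul_e : (S + D) * e = (twistCoeff x z k * a) • single ℓ ((k + 1 : ℕ) : Fin n) 1 := by
      rw [add_mul, smul_single_mul_smul_single_of_ne
        (natCast_fin_ne_of_lt (by omega) (by omega) (by omega)), add_zero, sum_mul,
        sum_eq_single_of_mem k (self_mem_range_succ k) fun j hj hjk =>
          smul_single_mul_smul_single_of_ne
            (natCast_fin_ne_of_lt (by simp at hj; omega) (by omega) hjk) _ _]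
      exact smul_single_mul_smul_single_same _ _ _ _ _
    rw [partialTwist_succ, ih (by omega), Jmat_succ, Jmat_succ, neg_smul,
      ← sub_eq_add_neg, one_add_mul_one_add_mul_one_sub he_mul he_sq, hmul_e,
      sum_range_succ _ (k + 1), twistCoeff_succ, mul_neg, neg_smul]
    abel

theorem partialTwist_last (hn : 2 ≤ n) (x : Fin n → R) (z : R) :
    partialTwist x z (n - 2) =
      1 + ∑ j ∈ range n, twistCoeff x z j • single ((n - 1 : ℕ) : Fin n) (j : Fin n) 1 := by
  rw [partialTwist_eq hn x z _ le_rfl, show n - 2 + 1 = n - 1 by omega,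
    ← sum_range_succ (fun j : ℕ => twistCoeff x z j • single ((n - 1 : ℕ) : Fin n) (j : Fin n) 1),
    Nat.sub_add_cancel NeZero.one_le]

end

/-- **Closed form of the twisted factor (§2.3)**. -/
theorem twisted_factor_closed_form (n : ℕ) [NeZero n] (hn : 2 ≤ n)
    (x : Fin n → R) (z : R) :
    ((prodDesc (fun j => Jmat n (j + 1) (x ((j + 1 : ℕ) : Fin n))) (n - 2))
        * J0mat n z (x 0)
        * dnmat n ((((-1 : R) ^ (n - 1)) * ∏ i : Fin n, x i) * z)
        * (prodAsc (fun j => Jmat n (j + 1) (-(x ((j + 1 : ℕ) : Fin n)))) (n - 2))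
      = prodAsc (fun j =>
          1 + (((-1 : R) ^ j * ∏ m ∈ Finset.range (j + 1), x ((m : ℕ) : Fin n)) * z) •
            single (((n - 1 : ℕ)) : Fin n) ((j : ℕ) : Fin n) (1 : R)) n)
    ∧
    ((prodDesc (fun j => Jmat n (j + 1) (x ((j + 1 : ℕ) : Fin n))) (n - 2))
        * J0mat n z (x 0)
        * dnmat n ((((-1 : R) ^ (n - 1)) * ∏ i : Fin n, x i) * z)
        * (prodAsc (fun j => Jmat n (j + 1) (-(x ((j + 1 : ℕ) : Fin n)))) (n - 2))
      = 1 + ∑ j ∈ Finset.range n,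
          (((-1 : R) ^ j * ∏ m ∈ Finset.range (j + 1), x ((m : ℕ) : Fin n)) * z) •
            single (((n - 1 : ℕ)) : Fin n) ((j : ℕ) : Fin n) (1 : R)) := by
  have hsum := partialTwist_last hn x z
  refine ⟨hsum.trans (prodAsc_one_add_of_mul_eq_zero _ n fun i j hij hj => ?_).symm, hsum⟩
  exact smul_single_mul_smul_single_of_ne
    (natCast_fin_ne_of_lt (by omega) (by omega) (by omega)) _ _
end
end

section
/- (Additive form of the k = 0 f-factor identity, Lemma B.2, equation (B.18).) Let λ be a partition and N ≥ 1 an integer. Then 2·( ∑_{(i,j)∈λ: λ^∨_j−i ≡ 0 (mod N)} λ_i − ∑_{(i,j)∈λ: λ^∨_j−i ≡ −1 (mod N)} λ_i ) = ∑_{a ∈ ℤ/Nℤ} (|λ|_{a−1} − |λ|_a)², where the sums on the left run over the cells of the Young diagram of λ. -/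
/-!
Additive form of the k = 0 f-factor identity, Lemma B.2, equation (B.18).
A partition `λ` is encoded 0-based as an antitone, eventually-zero function
`f : ℕ → ℕ` (`λ_i = f (i−1)` for `i ≥ 1`), with a bound `B` beyond which it
vanishes.  `cellSum f g N c` is the sum of `g (i−1)` over the cells `(i,j)` of
the Young diagram of `f` with `λ^∨_j − i ≡ c (mod N)`, and
`wt f B N m = |λ|_m = ∑_{s≥1, s≡m (N)} λ_s` is the colored weight.
-/

noncomputable section

/-- the conjugate partition: `λ^∨_j = #{i₀ ∈ ℕ : f i₀ ≥ j}` (finite for `j ≥ 1`). -/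
def conjP (f : ℕ → ℕ) (j : ℕ) : ℕ := Set.ncard {i : ℕ | j ≤ f i}

/-- the sum of `g (i−1)` over the cells `(i,j)` of the Young diagram of `f`
with `λ^∨_j − i ≡ c (mod N)` — a finite sum, realized via `finsum`. -/
def cellSum (f g : ℕ → ℕ) (N : ℕ) (c : ℤ) : ℤ :=
  ∑ᶠ p ∈ {p : ℕ × ℕ | 1 ≤ p.1 ∧ 1 ≤ p.2 ∧ p.2 ≤ f (p.1 - 1) ∧
      ((conjP f p.2 : ℤ) - (p.1 : ℤ)) ≡ c [ZMOD (N : ℤ)]}, (g (p.1 - 1) : ℤ)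

/-- the colored weight `|λ|_m = ∑_{s ≥ 1, s ≡ m (mod N)} λ_s`, computed as a
finite sum using a vanishing bound `B` for `f` (`λ_s = f (s−1)`). -/
def wt (f : ℕ → ℕ) (B N : ℕ) (m : ℤ) : ℤ :=
  ∑ r ∈ Finset.range B, if ((r : ℤ) + 1) ≡ m [ZMOD (N : ℤ)] then (f r : ℤ) else 0

lemma conjP_ge_iff (f : ℕ → ℕ) (hf : Antitone f) (B : ℕ) (hB : ∀ m, B ≤ m → f m = 0)
    {j : ℕ} (hj : 1 ≤ j) (m : ℕ) : m + 1 ≤ conjP f j ↔ j ≤ f m := by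
  have hsub : {i : ℕ | j ≤ f i} ⊆ Set.Iio B := by
    intro i hi
    simp only [Set.mem_setOf_eq] at hi
    by_contra h
    simp only [Set.mem_Iio, not_lt] at h
    have := hB i h
    omega
  have hfin : {i : ℕ | j ≤ f i}.Finite := (Set.finite_Iio B).subset hsub
  constructor
  · intro h
    by_contra hc
    push_neg at hc
    have hsub2 : {i : ℕ | j ≤ f i} ⊆ Set.Iio m := by
      intro i hi
      simp only [Set.mem_setOf_eq] at hi
      simp only [Set.mem_Iio]
      by_contra h'
      push_neg at h'
      have := hf h'
      omega
    have := Set.ncard_le_ncard hsub2 (Set.finite_Iio m)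
    rw [show Set.Iio m = ↑(Finset.range m) from (Finset.coe_range m).symm,
      Set.ncard_coe_finset, Finset.card_range] at this
    unfold conjP at h
    omega
  · intro h
    have hsub2 : Set.Iic m ⊆ {i : ℕ | j ≤ f i} := by
      intro i hi
      simp only [Set.mem_Iic] at hi
      simp only [Set.mem_setOf_eq]
      exact le_trans h (hf hi)
    have := Set.ncard_le_ncard hsub2 hfin
    rw [show Set.Iic m = ↑(Finset.Iic m) from by simp, Set.ncard_coe_finset,
      Nat.card_Iic] at this
    unfold conjP
    omega

lemma conjP_le (f : ℕ → ℕ) (B : ℕ) (hB : ∀ m, B ≤ m → f m = 0)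
    {j : ℕ} (hj : 1 ≤ j) : conjP f j ≤ B := by
  have hsub : {i : ℕ | j ≤ f i} ⊆ Set.Iio B := by
    intro i hi
    simp only [Set.mem_setOf_eq] at hi
    by_contra h
    simp only [Set.mem_Iio, not_lt] at h
    have := hB i h
    omega
  have := Set.ncard_le_ncard hsub (Set.finite_Iio B)
  rw [show Set.Iio B = ↑(Finset.range B) from (Finset.coe_range B).symm,
    Set.ncard_coe_finset, Finset.card_range] at this
  exact this

lemma count_conjP (f : ℕ → ℕ) (hf : Antitone f) (B : ℕ) (hB : ∀ m, B ≤ m → f m = 0)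
    {i : ℕ} (hi : 1 ≤ i) (d : ℕ) :
    (Finset.Icc 1 (f (i-1))).filter (fun j => conjP f j = i + d)
      = Finset.Ioc (f (i+d)) (f (i-1+d)) := by
  ext j
  simp only [Finset.mem_filter, Finset.mem_Icc, Finset.mem_Ioc]
  constructor
  · rintro ⟨⟨h1, h2⟩, h3⟩
    constructor
    · by_contra h
      push_neg at h
      have := (conjP_ge_iff f hf B hB h1 (i+d)).2 h
      omega
    · have := (conjP_ge_iff f hf B hB h1 (i-1+d)).1 (by omega)
      exact this
  · rintro ⟨h1, h2⟩
    have hj1 : 1 ≤ j := by omega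
    have hge := (conjP_ge_iff f hf B hB hj1 (i-1+d)).2 h2
    have hlt : ¬ (i + d + 1 ≤ conjP f j) := by
      intro h
      have := (conjP_ge_iff f hf B hB hj1 (i+d)).1 h
      omega
    refine ⟨⟨hj1, le_trans h2 (hf (by omega))⟩, by omega⟩

lemma row_count (f : ℕ → ℕ) (hf : Antitone f) (B : ℕ) (hB : ∀ m, B ≤ m → f m = 0)
    (N : ℕ) {i : ℕ} (hi : 1 ≤ i) (c : ℤ) :
    ∑ j ∈ Finset.Icc 1 (f (i-1)), (if ((conjP f j : ℤ) - (i:ℤ)) ≡ c [ZMOD (N:ℤ)] then (1:ℤ) else 0)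
      = ∑ d ∈ Finset.range (B+1),
          (if ((d:ℤ) ≡ c [ZMOD (N:ℤ)]) then ((f (i-1+d) : ℤ) - (f (i+d) : ℤ)) else 0) := by
  have key : ∀ j ∈ Finset.Icc 1 (f (i-1)),
      (if ((conjP f j : ℤ) - (i:ℤ)) ≡ c [ZMOD (N:ℤ)] then (1:ℤ) else 0)
      = ∑ d ∈ Finset.range (B+1),
          (if conjP f j = i + d then (if ((d:ℤ) ≡ c [ZMOD (N:ℤ)]) then (1:ℤ) else 0) else 0) := by
    intro j hj
    simp only [Finset.mem_Icc] at hj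
    have hge : i ≤ conjP f j := by
      have := (conjP_ge_iff f hf B hB hj.1 (i-1)).2 hj.2
      omega
    have hle : conjP f j ≤ B := conjP_le f B hB hj.1
    have harg : ((conjP f j - i : ℕ) : ℤ) = (conjP f j : ℤ) - (i:ℤ) := Nat.cast_sub hge
    rw [Finset.sum_eq_single (conjP f j - i)]
    · rw [if_pos (by omega : conjP f j = i + (conjP f j - i)), harg]
    · intro b hb hne
      rw [if_neg (by omega)]
    · intro h
      exfalso
      apply h
      simp only [Finset.mem_range]
      omega
  rw [Finset.sum_congr rfl key, Finset.sum_comm]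
  apply Finset.sum_congr rfl
  intro d _
  rw [← Finset.sum_filter, count_conjP f hf B hB hi d]
  have hmon : f (i+d) ≤ f (i-1+d) := hf (by omega)
  by_cases hc : ((d:ℤ) ≡ c [ZMOD (N:ℤ)])
  · simp only [if_pos hc, Finset.sum_const, Nat.card_Ioc, nsmul_eq_mul, mul_one]
    exact Nat.cast_sub hmon
  · rw [if_neg hc]
    simp [hc]

lemma cellSum_eq (f : ℕ → ℕ) (hf : Antitone f) (B : ℕ) (hB : ∀ m, B ≤ m → f m = 0)
    (N : ℕ) (c : ℤ) :
    cellSum f f N c = ∑ i ∈ Finset.range B, (f i : ℤ) *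
      ∑ d ∈ Finset.range (B+1),
        (if ((d:ℤ) ≡ c [ZMOD (N:ℤ)]) then ((f (i+d) : ℤ) - (f (i+d+1) : ℤ)) else 0) := by
  classical
  have hset : {p : ℕ × ℕ | 1 ≤ p.1 ∧ 1 ≤ p.2 ∧ p.2 ≤ f (p.1 - 1) ∧
      ((conjP f p.2 : ℤ) - (p.1 : ℤ)) ≡ c [ZMOD (N : ℤ)]}
      = ↑((Finset.Icc 1 B ×ˢ Finset.Icc 1 (f 0)).filter (fun p => 1 ≤ p.1 ∧ 1 ≤ p.2 ∧ p.2 ≤ f (p.1 - 1) ∧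
      ((conjP f p.2 : ℤ) - (p.1 : ℤ)) ≡ c [ZMOD (N : ℤ)])) := by
    ext p
    simp only [Set.mem_setOf_eq, Finset.coe_filter, Finset.mem_product, Finset.mem_Icc]
    constructor
    · intro h
      refine ⟨⟨⟨h.1, ?_⟩, ⟨h.2.1, ?_⟩⟩, h⟩
      · by_contra hc'
        push_neg at hc'
        have h0 := hB (p.1 - 1) (by omega)
        have := h.2.1
        have := h.2.2.1
        omega
      · exact le_trans h.2.2.1 (hf (Nat.zero_le _))
    · exact fun h => h.2
  rw [cellSum, hset, finsum_mem_coe_finset, Finset.sum_filter, Finset.sum_product,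
    ← Finset.Ico_add_one_right_eq_Icc, Finset.sum_Ico_eq_sum_range]
  have hrange : B + 1 - 1 = B := by omega
  rw [hrange]
  apply Finset.sum_congr rfl
  intro i₀ hi₀
  dsimp only
  have e0 : 1 + i₀ - 1 = i₀ := by omega
  simp only [e0]
  have hi : 1 ≤ 1 + i₀ := by omega
  have hsub : Finset.Icc 1 (f i₀) ⊆ Finset.Icc 1 (f 0) := by
    apply Finset.Icc_subset_Icc_right
    exact hf (Nat.zero_le _)
  rw [← Finset.sum_subset hsub]
  · have step : ∀ j ∈ Finset.Icc 1 (f i₀),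
        (if 1 ≤ 1 + i₀ ∧ 1 ≤ j ∧ j ≤ f i₀ ∧
            ((conjP f j : ℤ) - ((1 + i₀ : ℕ) : ℤ)) ≡ c [ZMOD (N : ℤ)] then (f i₀ : ℤ) else 0)
        = (f i₀ : ℤ) * (if ((conjP f j : ℤ) - ((1 + i₀ : ℕ) : ℤ)) ≡ c [ZMOD (N:ℤ)] then (1:ℤ) else 0) := by
      intro j hj
      simp only [Finset.mem_Icc] at hj
      by_cases hcg : ((conjP f j : ℤ) - ((1 + i₀ : ℕ) : ℤ)) ≡ c [ZMOD (N:ℤ)]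
      · rw [if_pos ⟨hi, hj.1, hj.2, hcg⟩, if_pos hcg, mul_one]
      · rw [if_neg (by tauto), if_neg hcg, mul_zero]
    have hrc := row_count f hf B hB N hi c
    simp only [e0] at hrc
    rw [Finset.sum_congr rfl step, ← Finset.mul_sum, hrc]
    congr 1
    apply Finset.sum_congr rfl
    intro d _
    have e1 : i₀ + d = i₀ + d := rfl
    have e2 : 1 + i₀ + d = i₀ + d + 1 := by omega
    rw [e2]
  · intro j hjm hjn
    simp only [Finset.mem_Icc] at hjm hjn
    rw [if_neg (by omega)]

lemma telescope (f : ℕ → ℕ) (B : ℕ) (hB : ∀ m, B ≤ m → f m = 0) (N : ℕ) (c : ℤ) (i : ℕ) :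
    ∑ d ∈ Finset.range (B+1),
        (if ((d:ℤ) ≡ c [ZMOD (N:ℤ)]) then ((f (i+d) : ℤ) - (f (i+d+1) : ℤ)) else 0)
    = ∑ d ∈ Finset.range (B+2),
        (((if ((d:ℤ) ≡ c [ZMOD (N:ℤ)]) then (1:ℤ) else 0)
          - (if ((d:ℤ) ≡ c + 1 [ZMOD (N:ℤ)]) then (1:ℤ) else 0)) * (f (i+d) : ℤ))
      + (if ((0:ℤ) ≡ c + 1 [ZMOD (N:ℤ)]) then (1:ℤ) else 0) * (f i : ℤ) := by
  have e1 : ∀ d ∈ Finset.range (B+1), (if ((d:ℤ) ≡ c [ZMOD (N:ℤ)]) then ((f (i+d) : ℤ) - (f (i+d+1) : ℤ)) else 0)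
      = (if ((d:ℤ) ≡ c [ZMOD (N:ℤ)]) then (1:ℤ) else 0) * (f (i+d):ℤ)
        - (if ((d:ℤ) ≡ c [ZMOD (N:ℤ)]) then (1:ℤ) else 0) * (f (i+d+1):ℤ) := by
    intro d _
    split <;> ring
  rw [Finset.sum_congr rfl e1, Finset.sum_sub_distrib]
  have eA : ∑ d ∈ Finset.range (B+1), (if ((d:ℤ) ≡ c [ZMOD (N:ℤ)]) then (1:ℤ) else 0) * (f (i+d):ℤ)
      = ∑ d ∈ Finset.range (B+2), (if ((d:ℤ) ≡ c [ZMOD (N:ℤ)]) then (1:ℤ) else 0) * (f (i+d):ℤ) := by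
    rw [Finset.sum_range_succ (fun d => (if ((d:ℤ) ≡ c [ZMOD (N:ℤ)]) then (1:ℤ) else 0) * (f (i+d):ℤ)) (B+1)]
    have h0 : f (i+(B+1)) = 0 := hB _ (by omega)
    simp [h0]
  have eB : ∑ d ∈ Finset.range (B+1), (if ((d:ℤ) ≡ c [ZMOD (N:ℤ)]) then (1:ℤ) else 0) * (f (i+d+1):ℤ)
      = ∑ d ∈ Finset.range (B+2), (if ((d:ℤ) ≡ c + 1 [ZMOD (N:ℤ)]) then (1:ℤ) else 0) * (f (i+d):ℤ)
        - (if ((0:ℤ) ≡ c + 1 [ZMOD (N:ℤ)]) then (1:ℤ) else 0) * (f i : ℤ) := by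
    rw [Finset.sum_range_succ' (fun d => (if ((d:ℤ) ≡ c + 1 [ZMOD (N:ℤ)]) then (1:ℤ) else 0) * (f (i+d):ℤ)) (B+1)]
    have e2 : ∀ d ∈ Finset.range (B+1),
        (if ((d:ℤ) ≡ c [ZMOD (N:ℤ)]) then (1:ℤ) else 0) * (f (i+d+1):ℤ)
        = (if (((d+1 : ℕ):ℤ) ≡ c + 1 [ZMOD (N:ℤ)]) then (1:ℤ) else 0) * (f (i+(d+1)):ℤ) := by
      intro d _
      have hiff : (((d+1 : ℕ):ℤ) ≡ c + 1 [ZMOD (N:ℤ)]) ↔ ((d:ℤ) ≡ c [ZMOD (N:ℤ)]) := by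
        push_cast
        exact ⟨fun h => h.add_right_cancel' 1, fun h => h.add_right 1⟩
      rw [if_congr hiff rfl rfl]
      rfl
    rw [Finset.sum_congr rfl e2]
    simp
  rw [eA, eB]
  have e3 : ∀ d ∈ Finset.range (B+2),
      (((if ((d:ℤ) ≡ c [ZMOD (N:ℤ)]) then (1:ℤ) else 0)
        - (if ((d:ℤ) ≡ c + 1 [ZMOD (N:ℤ)]) then (1:ℤ) else 0)) * (f (i+d) : ℤ))
      = (if ((d:ℤ) ≡ c [ZMOD (N:ℤ)]) then (1:ℤ) else 0) * (f (i+d):ℤ)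
        - (if ((d:ℤ) ≡ c + 1 [ZMOD (N:ℤ)]) then (1:ℤ) else 0) * (f (i+d):ℤ) := fun d _ => by ring
  rw [Finset.sum_congr rfl e3, Finset.sum_sub_distrib]
  ring

lemma chi_cast (N : ℕ) (x y : ℤ) :
    (if (x ≡ y [ZMOD (N:ℤ)]) then (1:ℤ) else 0)
      = (if ((x : ZMod N) = (y : ZMod N)) then (1:ℤ) else 0) :=
  if_congr (ZMod.intCast_eq_intCast_iff x y N).symm rfl rfl |>.symm.trans rfl |>.symm

lemma lhs_combine (f : ℕ → ℕ) (hf : Antitone f)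
    (B : ℕ) (hB : ∀ m, B ≤ m → f m = 0)
    (N : ℕ) [NeZero N] (hN : 1 ≤ N) (i : ℕ) :
    (∑ d ∈ Finset.range (B+1),
        (if ((d:ℤ) ≡ (0:ℤ) [ZMOD (N:ℤ)]) then ((f (i+d) : ℤ) - (f (i+d+1) : ℤ)) else 0))
    - (∑ d ∈ Finset.range (B+1),
        (if ((d:ℤ) ≡ (-1:ℤ) [ZMOD (N:ℤ)]) then ((f (i+d) : ℤ) - (f (i+d+1) : ℤ)) else 0))
    = ∑ d ∈ Finset.range (B+2),
        (2 * (if (((d:ℕ) : ZMod N) = 0) then (1:ℤ) else 0)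
          - (if (((d:ℕ) : ZMod N) = 1) then (1:ℤ) else 0)
          - (if (((d:ℕ) : ZMod N) = -1) then (1:ℤ) else 0)) * (f (i+d) : ℤ)
      + ((if ((1 : ZMod N) = 0) then (1:ℤ) else 0) - 1) * (f i : ℤ) := by
  rw [telescope f B hB N 0 i, telescope f B hB N (-1) i]
  simp only [chi_cast, zero_add, neg_add_cancel, Int.cast_natCast, Int.cast_zero,
    Int.cast_one, Int.cast_neg, eq_self_iff_true, if_true, one_mul]
  have hS : (∑ d ∈ Finset.range (B+2),
        ((if (((d:ℕ) : ZMod N) = 0) then (1:ℤ) else 0)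
          - (if (((d:ℕ) : ZMod N) = 1) then (1:ℤ) else 0)) * (f (i+d) : ℤ))
      - (∑ d ∈ Finset.range (B+2),
        ((if (((d:ℕ) : ZMod N) = -1) then (1:ℤ) else 0)
          - (if (((d:ℕ) : ZMod N) = 0) then (1:ℤ) else 0)) * (f (i+d) : ℤ))
      = ∑ d ∈ Finset.range (B+2),
        (2 * (if (((d:ℕ) : ZMod N) = 0) then (1:ℤ) else 0)
          - (if (((d:ℕ) : ZMod N) = 1) then (1:ℤ) else 0)
          - (if (((d:ℕ) : ZMod N) = -1) then (1:ℤ) else 0)) * (f (i+d) : ℤ) := by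
    rw [← Finset.sum_sub_distrib]
    apply Finset.sum_congr rfl
    intro d _
    ring
  have hab : (if ((0 : ZMod N) = 1) then (1:ℤ) else 0) * (f i : ℤ) - (f i : ℤ)
      = ((if ((1 : ZMod N) = 0) then (1:ℤ) else 0) - 1) * (f i : ℤ) := by
    rw [if_congr (eq_comm) rfl rfl]
    ring
  linear_combination hS + hab

lemma sum_ifif (N : ℕ) [NeZero N] (x y : ZMod N) (u v : ℤ) :
    ∑ a : ZMod N, (if x = a then u else 0) * (if y = a then v else 0)
      = if x = y then u * v else 0 := by
  rw [Finset.sum_eq_single x]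
  · rw [if_pos rfl]
    by_cases h : x = y
    · rw [if_pos h.symm, if_pos h]
    · rw [if_neg (fun hyx => h hyx.symm), if_neg h, mul_zero]
  · intro b _ hne
    rw [if_neg (fun h => hne h.symm), zero_mul]
  · intro h
    exact absurd (Finset.mem_univ x) h

lemma wt_val (f : ℕ → ℕ) (B N : ℕ) [NeZero N] (a : ZMod N) :
    wt f B N (a.val : ℤ) = ∑ r ∈ Finset.range B, (if ((r : ZMod N) + 1 = a) then (f r : ℤ) else 0) := by
  unfold wt
  apply Finset.sum_congr rfl
  intro r _
  have hiff : (((r : ℤ) + 1) ≡ (a.val : ℤ) [ZMOD (N : ℤ)]) ↔ ((r : ZMod N) + 1 = a) := by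
    rw [← ZMod.intCast_eq_intCast_iff]
    push_cast
    simp [ZMod.natCast_val, ZMod.cast_id]
  rw [if_congr hiff rfl rfl]

lemma wt_val_sub_one (f : ℕ → ℕ) (B N : ℕ) [NeZero N] (a : ZMod N) :
    wt f B N ((a.val : ℤ) - 1) = ∑ r ∈ Finset.range B, (if ((r : ZMod N) + 2 = a) then (f r : ℤ) else 0) := by
  unfold wt
  apply Finset.sum_congr rfl
  intro r _
  have hiff : (((r : ℤ) + 1) ≡ ((a.val : ℤ) - 1) [ZMOD (N : ℤ)]) ↔ ((r : ZMod N) + 2 = a) := by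
    rw [← ZMod.intCast_eq_intCast_iff]
    push_cast
    rw [ZMod.natCast_val, ZMod.cast_id]
    constructor
    · intro h
      have : ((r : ZMod N) + 1) + 1 = (a - 1) + 1 := by rw [h]
      rw [sub_add_cancel] at this
      rw [← this]; ring
    · intro h
      rw [← h]; ring
  rw [if_congr hiff rfl rfl]

lemma rhs_eq (f : ℕ → ℕ) (B N : ℕ) [NeZero N] :
    ∑ a : ZMod N, (wt f B N ((a.val : ℤ) - 1) - wt f B N (a.val : ℤ)) ^ 2
    = ∑ r ∈ Finset.range B, ∑ s ∈ Finset.range B, (f r : ℤ) * (f s : ℤ) *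
        (2 * (if ((r : ZMod N) = (s : ZMod N)) then (1:ℤ) else 0)
          - (if ((s : ZMod N) = (r : ZMod N) + 1) then (1:ℤ) else 0)
          - (if ((r : ZMod N) = (s : ZMod N) + 1) then (1:ℤ) else 0)) := by
  have step1 : ∀ a : ZMod N, (wt f B N ((a.val : ℤ) - 1) - wt f B N (a.val : ℤ)) ^ 2
      = ∑ r ∈ Finset.range B, ∑ s ∈ Finset.range B,
          ((if ((r : ZMod N) + 2 = a) then (f r : ℤ) else 0) - (if ((r : ZMod N) + 1 = a) then (f r : ℤ) else 0))
          * ((if ((s : ZMod N) + 2 = a) then (f s : ℤ) else 0) - (if ((s : ZMod N) + 1 = a) then (f s : ℤ) else 0)) := by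
    intro a
    rw [wt_val, wt_val_sub_one, ← Finset.sum_sub_distrib, sq, Finset.sum_mul_sum]
  rw [Finset.sum_congr rfl (fun a _ => step1 a), Finset.sum_comm]
  apply Finset.sum_congr rfl
  intro r _
  rw [Finset.sum_comm]
  apply Finset.sum_congr rfl
  intro s _
  have expand : ∀ a : ZMod N,
      ((if ((r : ZMod N) + 2 = a) then (f r : ℤ) else 0) - (if ((r : ZMod N) + 1 = a) then (f r : ℤ) else 0))
      * ((if ((s : ZMod N) + 2 = a) then (f s : ℤ) else 0) - (if ((s : ZMod N) + 1 = a) then (f s : ℤ) else 0))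
      = (if ((r : ZMod N) + 2 = a) then (f r : ℤ) else 0) * (if ((s : ZMod N) + 2 = a) then (f s : ℤ) else 0)
        - (if ((r : ZMod N) + 2 = a) then (f r : ℤ) else 0) * (if ((s : ZMod N) + 1 = a) then (f s : ℤ) else 0)
        - (if ((r : ZMod N) + 1 = a) then (f r : ℤ) else 0) * (if ((s : ZMod N) + 2 = a) then (f s : ℤ) else 0)
        + (if ((r : ZMod N) + 1 = a) then (f r : ℤ) else 0) * (if ((s : ZMod N) + 1 = a) then (f s : ℤ) else 0) :=
    fun a => by ring
  rw [Finset.sum_congr rfl (fun a _ => expand a)]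
  rw [Finset.sum_add_distrib, Finset.sum_sub_distrib, Finset.sum_sub_distrib,
    sum_ifif, sum_ifif, sum_ifif, sum_ifif]
  have h1 : ((r : ZMod N) + 2 = (s : ZMod N) + 2) ↔ ((r : ZMod N) = (s : ZMod N)) := by
    constructor
    · intro h; have := add_right_cancel h; exact this
    · intro h; rw [h]
  have h2 : ((r : ZMod N) + 2 = (s : ZMod N) + 1) ↔ ((s : ZMod N) = (r : ZMod N) + 1) := by
    constructor
    · intro h
      have : (r : ZMod N) + 1 + 1 = (s : ZMod N) + 1 := by rw [← h]; ring
      exact (add_right_cancel this).symm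
    · intro h; rw [h]; ring
  have h3 : ((r : ZMod N) + 1 = (s : ZMod N) + 2) ↔ ((r : ZMod N) = (s : ZMod N) + 1) := by
    constructor
    · intro h
      have : (r : ZMod N) + 1 = (s : ZMod N) + 1 + 1 := by rw [h]; ring
      exact add_right_cancel this
    · intro h; rw [h]; ring
  have h4 : ((r : ZMod N) + 1 = (s : ZMod N) + 1) ↔ ((r : ZMod N) = (s : ZMod N)) :=
    ⟨fun h => add_right_cancel h, fun h => by rw [h]⟩
  rw [if_congr h1 rfl rfl, if_congr h2 rfl rfl, if_congr h3 rfl rfl, if_congr h4 rfl rfl]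
  split_ifs <;> ring

lemma pair_sum (B : ℕ) (e : ℕ → ℕ → ℤ) (he : ∀ r s, B ≤ s → e r s = 0)
    (he2 : ∀ r s, B ≤ r → e r s = 0) :
    ∑ r ∈ Finset.range B, ∑ s ∈ Finset.range B, e r s
    = (∑ i ∈ Finset.range B, ∑ d ∈ Finset.range (B+2), e i (i+d))
      + ∑ i ∈ Finset.range B, ∑ d ∈ Finset.Icc 1 (B+1), e (i+d) i := by
  have upper : ∀ i, i < B → ∑ s ∈ Finset.Ico i B, e i s = ∑ d ∈ Finset.range (B+2), e i (i+d) := by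
    intro i hi
    have h1 : ∑ s ∈ Finset.Ico i (i+(B+2)), e i s = ∑ d ∈ Finset.range (B+2), e i (i+d) := by
      rw [Finset.sum_Ico_eq_sum_range, show i+(B+2)-i = B+2 from by omega]
    rw [← h1]
    apply Finset.sum_subset
    · apply Finset.Ico_subset_Ico_right
      omega
    · intro s hs hns
      simp only [Finset.mem_Ico] at hs hns
      exact he i s (by omega)
  have lower2 : ∀ i, i < B → ∑ j ∈ Finset.Ico (i+1) B, e j i = ∑ d ∈ Finset.Icc 1 (B+1), e (i+d) i := by
    intro i hi
    have h1 : ∑ j ∈ Finset.Ico (i+1) (i+1+(B+1)), e j i = ∑ d ∈ Finset.range (B+1), e (i+1+d) i := by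
      rw [Finset.sum_Ico_eq_sum_range, show i+1+(B+1)-(i+1) = B+1 from by omega]
    have h2 : ∑ d ∈ Finset.Icc 1 (B+1), e (i+d) i = ∑ d ∈ Finset.range (B+1), e (i+1+d) i := by
      rw [← Finset.Ico_add_one_right_eq_Icc, Finset.sum_Ico_eq_sum_range]
      have : B + 1 + 1 - 1 = B + 1 := by omega
      rw [this]
      apply Finset.sum_congr rfl
      intro d _
      rw [show i + (1 + d) = i + 1 + d from by omega]
    rw [h2, ← h1]
    apply Finset.sum_subset
    · apply Finset.Ico_subset_Ico_right
      omega
    · intro s hs hns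
      simp only [Finset.mem_Ico] at hs hns
      exact he2 s i (by omega)
  have rowsplit : ∀ r ∈ Finset.range B, ∑ s ∈ Finset.range B, e r s
      = (∑ s ∈ Finset.Ico 0 r, e r s) + ∑ s ∈ Finset.Ico r B, e r s := by
    intro r hr
    simp only [Finset.mem_range] at hr
    rw [Finset.range_eq_Ico, ← Finset.sum_Ico_consecutive _ (Nat.zero_le r) (le_of_lt hr)]
  rw [Finset.sum_congr rfl rowsplit, Finset.sum_add_distrib]
  have swap : ∑ r ∈ Finset.range B, ∑ s ∈ Finset.Ico 0 r, e r s
      = ∑ i ∈ Finset.range B, ∑ j ∈ Finset.Ico (i+1) B, e j i := by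
    simp only [Finset.range_eq_Ico]
    exact (Finset.sum_Ico_Ico_comm' 0 B (fun i j => e j i)).symm
  rw [swap]
  rw [Finset.sum_congr rfl (fun i hi => lower2 i (Finset.mem_range.mp hi))]
  rw [Finset.sum_congr rfl (fun i hi => upper i (Finset.mem_range.mp hi))]
  exact add_comm _ _


/-- **Lemma B.2, equation (B.18)**:
`2(∑_{(i,j)∈λ: λ^∨_j−i ≡ 0} λ_i − ∑_{(i,j)∈λ: λ^∨_j−i ≡ −1} λ_i)
  = ∑_{a∈ℤ/Nℤ} (|λ|_{a−1} − |λ|_a)²`. -/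
theorem f_factor_identity_zero (f : ℕ → ℕ) (hf : Antitone f)
    (B : ℕ) (hB : ∀ m, B ≤ m → f m = 0)
    (N : ℕ) [NeZero N] (hN : 1 ≤ N) :
    2 * (cellSum f f N 0 - cellSum f f N (-1))
      = ∑ a : ZMod N,
          (wt f B N ((a.val : ℤ) - 1) - wt f B N (a.val : ℤ)) ^ 2 := by

  classical
  -- notation
  have hFz : ∀ m : ℕ, B ≤ m → ((f m : ℤ) = 0) := fun m hm => by rw [hB m hm]; norm_num
  -- conversion iffs
  have hG1 : ∀ i d : ℕ, ((i : ZMod N) = ((i+d : ℕ) : ZMod N)) ↔ (((d:ℕ) : ZMod N) = 0) := by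
    intro i d
    push_cast
    rw [left_eq_add]
  have hG2 : ∀ i d : ℕ, (((i+d : ℕ) : ZMod N) = (i : ZMod N) + 1) ↔ (((d:ℕ) : ZMod N) = 1) := by
    intro i d
    push_cast
    rw [add_right_inj]
  have hG3 : ∀ i d : ℕ, ((i : ZMod N) = ((i+d : ℕ) : ZMod N) + 1) ↔ (((d:ℕ) : ZMod N) = -1) := by
    intro i d
    push_cast
    rw [add_assoc, left_eq_add]
    constructor
    · intro h; linear_combination h
    · intro h; linear_combination h
  have hG1' : ∀ i d : ℕ, (((i+d : ℕ) : ZMod N) = (i : ZMod N)) ↔ (((d:ℕ) : ZMod N) = 0) := by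
    intro i d
    rw [eq_comm]
    exact hG1 i d
  -- LHS
  rw [cellSum_eq f hf B hB N 0, cellSum_eq f hf B hB N (-1), ← Finset.sum_sub_distrib]
  have hL1 : ∀ i ∈ Finset.range B,
      (f i : ℤ) * (∑ d ∈ Finset.range (B+1),
        (if ((d:ℤ) ≡ (0:ℤ) [ZMOD (N:ℤ)]) then ((f (i+d) : ℤ) - (f (i+d+1) : ℤ)) else 0))
      - (f i : ℤ) * (∑ d ∈ Finset.range (B+1),
        (if ((d:ℤ) ≡ (-1:ℤ) [ZMOD (N:ℤ)]) then ((f (i+d) : ℤ) - (f (i+d+1) : ℤ)) else 0))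
      = (∑ d ∈ Finset.range (B+2), (f i : ℤ) * (f (i+d) : ℤ) *
          (2 * (if (((d:ℕ) : ZMod N) = 0) then (1:ℤ) else 0)
            - (if (((d:ℕ) : ZMod N) = 1) then (1:ℤ) else 0)
            - (if (((d:ℕ) : ZMod N) = -1) then (1:ℤ) else 0)))
        + ((if ((1 : ZMod N) = 0) then (1:ℤ) else 0) - 1) * ((f i : ℤ) * (f i : ℤ)) := by
    intro i _
    rw [← mul_sub, lhs_combine f hf B hB N hN i, mul_add, Finset.mul_sum]
    congr 1
    · apply Finset.sum_congr rfl
      intro d _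
      ring
    · ring
  rw [Finset.sum_congr rfl hL1, Finset.sum_add_distrib]
  -- RHS
  rw [rhs_eq f B N]
  rw [pair_sum B (fun r s => (f r : ℤ) * (f s : ℤ) *
        (2 * (if ((r : ZMod N) = (s : ZMod N)) then (1:ℤ) else 0)
          - (if ((s : ZMod N) = (r : ZMod N) + 1) then (1:ℤ) else 0)
          - (if ((r : ZMod N) = (s : ZMod N) + 1) then (1:ℤ) else 0)))
      (fun r s hs => by simp [hFz s hs]) (fun r s hr => by simp [hFz r hr])]
  have hR1 : ∀ i ∈ Finset.range B,
      (∑ d ∈ Finset.range (B+2), (f i : ℤ) * (f (i+d) : ℤ) *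
        (2 * (if ((i : ZMod N) = ((i+d : ℕ) : ZMod N)) then (1:ℤ) else 0)
          - (if (((i+d : ℕ) : ZMod N) = (i : ZMod N) + 1) then (1:ℤ) else 0)
          - (if ((i : ZMod N) = ((i+d : ℕ) : ZMod N) + 1) then (1:ℤ) else 0)))
      = ∑ d ∈ Finset.range (B+2), (f i : ℤ) * (f (i+d) : ℤ) *
          (2 * (if (((d:ℕ) : ZMod N) = 0) then (1:ℤ) else 0)
            - (if (((d:ℕ) : ZMod N) = 1) then (1:ℤ) else 0)
            - (if (((d:ℕ) : ZMod N) = -1) then (1:ℤ) else 0)) := by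
    intro i _
    apply Finset.sum_congr rfl
    intro d _
    rw [if_congr (hG1 i d) rfl rfl, if_congr (hG2 i d) rfl rfl, if_congr (hG3 i d) rfl rfl]
  have hR2 : ∀ i ∈ Finset.range B,
      (∑ d ∈ Finset.Icc 1 (B+1), (f (i+d) : ℤ) * (f i : ℤ) *
        (2 * (if (((i+d : ℕ) : ZMod N) = (i : ZMod N)) then (1:ℤ) else 0)
          - (if ((i : ZMod N) = ((i+d : ℕ) : ZMod N) + 1) then (1:ℤ) else 0)
          - (if (((i+d : ℕ) : ZMod N) = (i : ZMod N) + 1) then (1:ℤ) else 0)))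
      = (∑ d ∈ Finset.range (B+2), (f i : ℤ) * (f (i+d) : ℤ) *
          (2 * (if (((d:ℕ) : ZMod N) = 0) then (1:ℤ) else 0)
            - (if (((d:ℕ) : ZMod N) = 1) then (1:ℤ) else 0)
            - (if (((d:ℕ) : ZMod N) = -1) then (1:ℤ) else 0)))
        - ((2:ℤ) - 2 * (if ((1 : ZMod N) = 0) then (1:ℤ) else 0)) * ((f i : ℤ) * (f i : ℤ)) := by
    intro i _
    have hstep : ∀ d ∈ Finset.Icc 1 (B+1),
        (f (i+d) : ℤ) * (f i : ℤ) *
        (2 * (if (((i+d : ℕ) : ZMod N) = (i : ZMod N)) then (1:ℤ) else 0)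
          - (if ((i : ZMod N) = ((i+d : ℕ) : ZMod N) + 1) then (1:ℤ) else 0)
          - (if (((i+d : ℕ) : ZMod N) = (i : ZMod N) + 1) then (1:ℤ) else 0))
        = (f i : ℤ) * (f (i+d) : ℤ) *
          (2 * (if (((d:ℕ) : ZMod N) = 0) then (1:ℤ) else 0)
            - (if (((d:ℕ) : ZMod N) = -1) then (1:ℤ) else 0)
            - (if (((d:ℕ) : ZMod N) = 1) then (1:ℤ) else 0)) := by
      intro d _
      rw [if_congr (hG1' i d) rfl rfl, if_congr (hG2 i d) rfl rfl, if_congr (hG3 i d) rfl rfl]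
      ring
    rw [Finset.sum_congr rfl hstep]
    have hicc : Finset.Icc 1 (B+1) = (Finset.range (B+2)).erase 0 := by
      ext x
      simp only [Finset.mem_Icc, Finset.mem_erase, Finset.mem_range]
      omega
    rw [hicc, Finset.sum_erase_eq_sub (Finset.mem_range.mpr (by omega : (0:ℕ) < B + 2))]
    have hzero : (f i : ℤ) * (f (i+0) : ℤ) *
          (2 * (if (((0:ℕ) : ZMod N) = 0) then (1:ℤ) else 0)
            - (if (((0:ℕ) : ZMod N) = -1) then (1:ℤ) else 0)
            - (if (((0:ℕ) : ZMod N) = 1) then (1:ℤ) else 0))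
        = ((2:ℤ) - 2 * (if ((1 : ZMod N) = 0) then (1:ℤ) else 0)) * ((f i : ℤ) * (f i : ℤ)) := by
      have c1 : (((0:ℕ) : ZMod N) = (-1 : ZMod N)) ↔ ((1 : ZMod N) = 0) := by
        push_cast
        constructor
        · intro h; linear_combination h
        · intro h; linear_combination h
      have c2 : (((0:ℕ) : ZMod N) = (1 : ZMod N)) ↔ ((1 : ZMod N) = 0) := by
        push_cast
        exact eq_comm
      rw [if_congr c1 rfl rfl, if_congr c2 rfl rfl, if_pos (by push_cast; rfl)]
      have : i + 0 = i := rfl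
      rw [this]
      split_ifs <;> ring
    rw [hzero]
    congr 1
    apply Finset.sum_congr rfl
    intro d _
    ring
  rw [Finset.sum_congr rfl hR1, Finset.sum_congr rfl hR2, Finset.sum_sub_distrib]
  have hcomb : 2 * (∑ x ∈ Finset.range B,
        ((if ((1 : ZMod N) = 0) then (1:ℤ) else 0) - 1) * ((f x : ℤ) * (f x : ℤ)))
      = - ∑ x ∈ Finset.range B,
          ((2:ℤ) - 2 * (if ((1 : ZMod N) = 0) then (1:ℤ) else 0)) * ((f x : ℤ) * (f x : ℤ)) := by
    rw [Finset.mul_sum, ← Finset.sum_neg_distrib]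
    apply Finset.sum_congr rfl
    intro x _
    ring
  linear_combination hcomb
end
end
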